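/- Let S = K[x_1,...,x_n,y_1,...,y_n] with the reverse lexicographic term order induced by x_1 > ... > x_n > y_1 > ... > y_n, and let φ : S → S be the K-algebra homomorphism with φ(x_i) = x_i and φ(y_i) = x_i. Suppose f ∈ S is bihomogeneous of degree (s,t) such that its initial monomial is in(f) = x_{i_1}···x_{i_s} y_{j_1}···y_{j_t} with i_1 ≤ ... ≤ i_s ≤ j_1 ≤ ... ≤ j_t. Then in(φ(f)) = φ(in(f)). -/

import Mathlib

open MvPolynomial

/-- The position of a variable of `S = K[x_1, …, x_n, y_1, …, y_n]` in the ordering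
`x_1 > x_2 > ⋯ > x_n > y_1 > ⋯ > y_n` (smaller position = bigger variable). -/
def varIdx (n : ℕ) : Fin n ⊕ Fin n → ℕ :=
  Sum.elim (fun i => (i : ℕ)) (fun j => n + (j : ℕ))

/-- Total degree of an exponent vector. -/
def expDeg {τ : Type} (u : τ →₀ ℕ) : ℕ := u.sum fun _ e => e

/-- The degree reverse lexicographic order (induced by the variable ordering
`varIdx`): `u` is smaller than `v` iff `u` has smaller total degree, or the degrees
agree and the last variable (w.r.t. `varIdx`) in which `u` and `v` differ has a
bigger exponent in `u`. -/
def RevLexLt (n : ℕ) (u v : (Fin n ⊕ Fin n) →₀ ℕ) : Prop :=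
  expDeg u < expDeg v ∨
    (expDeg u = expDeg v ∧ ∃ s, v s < u s ∧
      ∀ t, varIdx n s < varIdx n t → u t = v t)

/-- `u` is the exponent vector of the initial (leading) monomial `in(f)` of `f`
with respect to the given term order. -/
def IsInitialMonomial (n : ℕ) {K : Type} [Field K]
    (f : MvPolynomial (Fin n ⊕ Fin n) K) (u : (Fin n ⊕ Fin n) →₀ ℕ) : Prop :=
  u ∈ f.support ∧ ∀ v ∈ f.support, v ≠ u → RevLexLt n v u

/-! ### Auxiliary lemmas -/

/-- The "merge" map `inl i ↦ inl i`, `inr j ↦ inl j`. -/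
abbrev mergeMap (n : ℕ) : Fin n ⊕ Fin n → Fin n ⊕ Fin n := Sum.elim Sum.inl Sum.inl

theorem mapg_inl (n : ℕ) (w : (Fin n ⊕ Fin n) →₀ ℕ) (i : Fin n) :
    w.mapDomain (mergeMap n) (Sum.inl i) = w (Sum.inl i) + w (Sum.inr i) := by
  classical
  rw [Finsupp.mapDomain, Finsupp.sum_apply, Finsupp.sum_fintype]
  · rw [Fintype.sum_sum_type]
    simp [Finsupp.single_apply, Finset.sum_ite_eq']
  · intro a; simp

theorem mapg_inr (n : ℕ) (w : (Fin n ⊕ Fin n) →₀ ℕ) (j : Fin n) :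
    w.mapDomain (mergeMap n) (Sum.inr j) = 0 := by
  classical
  rw [Finsupp.mapDomain, Finsupp.sum_apply, Finsupp.sum_fintype]
  · rw [Fintype.sum_sum_type]; simp [Finsupp.single_apply]
  · intro a; simp

theorem expDeg_mapg (n : ℕ) (w : (Fin n ⊕ Fin n) →₀ ℕ) :
    expDeg (w.mapDomain (mergeMap n)) = expDeg w := by
  unfold expDeg
  rw [Finsupp.sum_mapDomain_index] <;> simp

/-- The key order-transfer lemma: if `v < u` in the revlex order, `u` and `v` have the
same `y`-degree, and `u` satisfies the shape condition, then the merged exponent vector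
of `v` is still strictly smaller than that of `u`. -/
theorem revLexLt_mapg (n : ℕ) (u v : (Fin n ⊕ Fin n) →₀ ℕ)
    (hy : ∑ j : Fin n, v (Sum.inr j) = ∑ j : Fin n, u (Sum.inr j))
    (hshape : ∀ i j : Fin n, u (Sum.inl i) ≠ 0 → u (Sum.inr j) ≠ 0 → i ≤ j)
    (h : RevLexLt n v u) :
    RevLexLt n (v.mapDomain (mergeMap n)) (u.mapDomain (mergeMap n)) := by
  classical
  rcases h with hdeg | ⟨hdeg, p, hp, hagree⟩
  · left; rwa [expDeg_mapg, expDeg_mapg]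
  right
  refine ⟨by rw [expDeg_mapg, expDeg_mapg, hdeg], ?_⟩
  cases p with
  | inl i0 =>
    have h1 : v (Sum.inr i0) = u (Sum.inr i0) :=
      hagree (Sum.inr i0)
        (by simp only [varIdx, Sum.elim_inl, Sum.elim_inr]; have := i0.isLt; omega)
    refine ⟨Sum.inl i0, ?_, ?_⟩
    · rw [mapg_inl, mapg_inl]; omega
    · intro q hq
      cases q with
      | inl i =>
        simp only [varIdx, Sum.elim_inl] at hq
        rw [mapg_inl, mapg_inl,
          hagree (Sum.inl i) (by simpa [varIdx] using hq),
          hagree (Sum.inr i) (by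
            simp only [varIdx, Sum.elim_inl, Sum.elim_inr]
            have := i.isLt
            omega)]
      | inr j => rw [mapg_inr, mapg_inr]
  | inr j0 =>
    have hyj : ∀ j : Fin n, (j0 : ℕ) < (j : ℕ) → v (Sum.inr j) = u (Sum.inr j) := by
      intro j hj
      exact hagree (Sum.inr j) (by simp only [varIdx, Sum.elim_inr]; omega)
    have hex : ∃ j1 : Fin n, v (Sum.inr j1) < u (Sum.inr j1) := by
      by_contra hc
      push_neg at hc
      have : ∑ j : Fin n, u (Sum.inr j) < ∑ j : Fin n, v (Sum.inr j) :=
        Finset.sum_lt_sum (fun j _ => hc j) ⟨j0, Finset.mem_univ _, hp⟩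
      omega
    obtain ⟨j1, hj1⟩ := hex
    have hj1lt : (j1 : ℕ) < (j0 : ℕ) := by
      rcases lt_trichotomy (j1 : ℕ) (j0 : ℕ) with h | h | h
      · exact h
      · have : j1 = j0 := Fin.ext h
        subst this; omega
      · rw [hyj j1 h] at hj1; omega
    have hxzero : ∀ i : Fin n, (j0 : ℕ) ≤ (i : ℕ) → u (Sum.inl i) = 0 := by
      intro i hi
      by_contra hne
      have := hshape i j1 hne (by omega)
      rw [Fin.le_def] at this
      omega
    have hge : ∀ i : Fin n, (j0 : ℕ) ≤ (i : ℕ) →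
        u (Sum.inl i) + u (Sum.inr i) ≤ v (Sum.inl i) + v (Sum.inr i) := by
      intro i hi
      rcases eq_or_lt_of_le hi with he | hlt
      · have : i = j0 := Fin.ext he.symm
        subst this
        rw [hxzero i hi]; omega
      · rw [hxzero i hi, hyj i hlt]; omega
    set T : Finset (Fin n) :=
      Finset.univ.filter
        (fun i : Fin n => u (Sum.inl i) + u (Sum.inr i) ≠ v (Sum.inl i) + v (Sum.inr i))
      with hT
    have hj0T : j0 ∈ T := by
      simp only [hT, Finset.mem_filter, Finset.mem_univ, true_and]
      have := hxzero j0 le_rfl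
      omega
    set i0 := T.max' ⟨j0, hj0T⟩ with hi0
    have hi0T : i0 ∈ T := T.max'_mem _
    have hji0 : j0 ≤ i0 := T.le_max' _ hj0T
    have hne0 : u (Sum.inl i0) + u (Sum.inr i0) ≠ v (Sum.inl i0) + v (Sum.inr i0) := by
      simpa [hT, Finset.mem_filter] using hi0T
    refine ⟨Sum.inl i0, ?_, ?_⟩
    · rw [mapg_inl, mapg_inl]
      have := hge i0 (Fin.le_def.mp hji0)
      omega
    · intro q hq
      cases q with
      | inl i =>
        simp only [varIdx, Sum.elim_inl] at hq
        rw [mapg_inl, mapg_inl]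
        by_contra hc
        have hiT : i ∈ T := by
          simp only [hT, Finset.mem_filter, Finset.mem_univ, true_and]
          omega
        have := T.le_max' i hiT
        rw [Fin.le_def] at this
        omega
      | inr j => rw [mapg_inr, mapg_inr]

theorem revLexLt_ne (n : ℕ) (a b : (Fin n ⊕ Fin n) →₀ ℕ) (h : RevLexLt n a b) : a ≠ b := by
  rintro rfl
  rcases h with h | ⟨_, s, hs, _⟩
  · omega
  · omega

/-- **Lemma.**  Let `S = K[x_1,…,x_n,y_1,…,y_n]` with the reverse lexicographic term
order induced by `x_1 > ⋯ > x_n > y_1 > ⋯ > y_n`, and let `φ : S → S` be the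
`K`-algebra homomorphism with `φ(x_i) = x_i` and `φ(y_i) = x_i`.  Suppose `f ∈ S`
is bihomogeneous of degree `(s,t)` and its initial monomial
`in(f) = x_{i_1} ⋯ x_{i_s} y_{j_1} ⋯ y_{j_t}` satisfies
`i_1 ≤ ⋯ ≤ i_s ≤ j_1 ≤ ⋯ ≤ j_t`.  Then `in(φ(f)) = φ(in(f))`. -/
theorem initial_of_image
    (K : Type) [Field K] (n : ℕ)
    (f : MvPolynomial (Fin n ⊕ Fin n) K) (s t : ℕ)
    -- f is bihomogeneous of degree (s, t)
    (hbihom : ∀ v ∈ f.support,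
      (∑ i : Fin n, v (Sum.inl i)) = s ∧ (∑ j : Fin n, v (Sum.inr j)) = t)
    (u : (Fin n ⊕ Fin n) →₀ ℕ)
    (hu : IsInitialMonomial n f u)
    -- every x-index occurring in in(f) is ≤ every y-index occurring in in(f)
    (hshape : ∀ i j : Fin n, u (Sum.inl i) ≠ 0 → u (Sum.inr j) ≠ 0 → i ≤ j) :
    IsInitialMonomial n
      (rename (Sum.elim Sum.inl Sum.inl) f)
      (u.mapDomain (Sum.elim Sum.inl Sum.inl)) := by
  classical
  set F : ((Fin n ⊕ Fin n) →₀ ℕ) → ((Fin n ⊕ Fin n) →₀ ℕ) :=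
    Finsupp.mapDomain (mergeMap n) with hF
  have key : ∀ v ∈ f.support, v ≠ u → RevLexLt n (F v) (F u) := by
    intro v hv hne
    exact revLexLt_mapg n u v
      (by rw [(hbihom v hv).2, (hbihom u hu.1).2]) hshape (hu.2 v hv hne)
  have hFne : ∀ v ∈ f.support, v ≠ u → F v ≠ F u := fun v hv hne =>
    revLexLt_ne n _ _ (key v hv hne)
  have hcoeff : coeff (F u) (rename (mergeMap n) f) = coeff u f := by
    show (Finsupp.mapDomain F (AddMonoidAlgebra.coeff f)) (F u) = _
    rw [Finsupp.mapDomain, Finsupp.sum_apply, Finsupp.sum]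
    refine (Finset.sum_eq_single_of_mem u hu.1 ?_).trans ?_
    · intro b hb hbne
      rw [Finsupp.single_apply, if_neg (hFne b hb hbne)]
    · rw [Finsupp.single_eq_same]
      rfl
  constructor
  · rw [mem_support_iff, hcoeff]
    exact mem_support_iff.mp hu.1
  · intro w hw hne
    have hsub : (rename (mergeMap n) f).support ⊆ f.support.image F := by
      intro w hw
      obtain ⟨v, hv1, hv2⟩ := coeff_rename_ne_zero _ _ _ (mem_support_iff.mp hw)
      exact Finset.mem_image.mpr ⟨v, mem_support_iff.mpr hv2, hv1⟩
    obtain ⟨v, hv, rfl⟩ := Finset.mem_image.mp (hsub hw)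
    have hvne : v ≠ u := by
      rintro rfl
      exact hne rfl
    exact key v hv hvne
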